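/- Let q > 1, p ∈ (0,1) and 0 < δ < λ < 1/2, and suppose that q·log(min{p, 1−p})/((q−1)·log √(λδ)) < 1. Let k ≥ 1 be an integer, B₁ := diag(λ, δ) and B₂ := λ·R_{π/(2k)}, where R_θ denotes the 2×2 rotation matrix through angle θ. Then 𝔯_q(B₁, B₂, p) ≤ q·log(min{p, 1−p})/((q−1)·log √(λδ)). -/

import Mathlib

open MeasureTheory Filter Topology

noncomputable section

/-- The operator norm of a `d × d` real matrix induced by the Euclidean norm on `ℝ^d`. -/
noncomputable def opNorm {d : ℕ} (A : Matrix (Fin d) (Fin d) ℝ) : ℝ :=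
  ‖Matrix.toEuclideanCLM (𝕜 := ℝ) (n := Fin d) A‖

/-- The singular values of a `d × d` real matrix, in decreasing order:
`singularValues A j` is `σ_{j+1}(A)`, the `(j+1)`-st largest singular value. -/
noncomputable def singularValues {d : ℕ} (A : Matrix (Fin d) (Fin d) ℝ) : Fin d → ℝ :=
  fun j =>
    (fun i => Real.sqrt ((Matrix.isHermitian_iff_isSymm.mpr (Matrix.isSymm_transpose_mul_self A)).eigenvalues i))
      (Tuple.sort (fun i => Real.sqrt ((Matrix.isHermitian_iff_isSymm.mpr (Matrix.isSymm_transpose_mul_self A)).eigenvalues i))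
        (Fin.rev j))

/-- The singular value function `φ^s(A)`. -/
noncomputable def svf {d : ℕ} (s : ℝ) (A : Matrix (Fin d) (Fin d) ℝ) : ℝ :=
  if (d : ℝ) ≤ s then |A.det| ^ (s / d)
  else ∏ i : Fin d,
    if (i : ℕ) < ⌊s⌋₊ then singularValues A i
    else if (i : ℕ) = ⌊s⌋₊ then singularValues A i ^ (s - (⌊s⌋₊ : ℝ))
    else 1

/-- The product `A_{w 0} ⋯ A_{w (n-1)}` of matrices along the word `w`. -/
noncomputable def wordProd {d n : ℕ} (A : Fin 2 → Matrix (Fin d) (Fin d) ℝ)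
    (w : Fin n → Fin 2) : Matrix (Fin d) (Fin d) ℝ :=
  (List.ofFn fun j => A (w j)).prod

/-- The probability vector `(p, 1-p)`. -/
noncomputable def pvec (p : ℝ) : Fin 2 → ℝ := ![p, 1 - p]

/-- `Σ_{i₁,…,i_n ∈ {1,2}} φ^s(A_{i₁}⋯A_{i_n})^{1−q} p_{i₁}^q ⋯ p_{i_n}^q`. -/
noncomputable def Zsum (A : Fin 2 → Matrix (Fin 2) (Fin 2) ℝ) (p q s : ℝ) (n : ℕ) : ℝ :=
  ∑ w : Fin n → Fin 2,
    svf s (wordProd A w) ^ (1 - q) * ∏ j : Fin n, pvec p (w j) ^ q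

/-- `𝔯_q(A₁, A₂, p)`. -/
noncomputable def rqDim (A : Fin 2 → Matrix (Fin 2) (Fin 2) ℝ) (p q : ℝ) : ℝ :=
  sSup {s : ℝ | 0 < s ∧ Summable (fun n : ℕ => Zsum A p q s (n + 1))}

/-- `R_q(A₁, A₂, p, s)`. -/
noncomputable def Rq (A : Fin 2 → Matrix (Fin 2) (Fin 2) ℝ) (p q s : ℝ) : ℝ :=
  limUnder atTop (fun n : ℕ => (1 / (n : ℝ)) * Real.log (Zsum A p q s n))

/-- The minimum over all words of length `n` of the norm of the corresponding product. -/
noncomputable def minNormProd (A : Fin 2 → Matrix (Fin 2) (Fin 2) ℝ) (n : ℕ) : ℝ :=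
  ⨅ w : Fin n → Fin 2, opNorm (wordProd A w)

/-- The lower spectral radius `ϱ̲(A₁, A₂)`. -/
noncomputable def lsr (A : Fin 2 → Matrix (Fin 2) (Fin 2) ℝ) : ℝ :=
  limUnder atTop (fun n : ℕ => minNormProd A n ^ (1 / (n : ℝ)))

/-- Pairs of invertible `2 × 2` matrices of operator norm less than one. -/
def validPair : Set (Matrix (Fin 2) (Fin 2) ℝ × Matrix (Fin 2) (Fin 2) ℝ) :=
  {B | IsUnit B.1 ∧ IsUnit B.2 ∧ opNorm B.1 < 1 ∧ opNorm B.2 < 1}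

/-- Rotation of `ℝ²` about the origin through angle `θ`. -/
noncomputable def rot (θ : ℝ) : Matrix (Fin 2) (Fin 2) ℝ :=
  !![Real.cos θ, -Real.sin θ; Real.sin θ, Real.cos θ]

/-- `(A₁, A₂)` is `(c, ε, λ)`-resistant. -/
def ResistantWith (c ε lam : ℝ) (A : Fin 2 → Matrix (Fin 2) (Fin 2) ℝ) : Prop :=
  ∀ n : ℕ, 1 ≤ n → ∀ w : Fin n → Fin 2,
    ((Finset.univ.filter fun j => w j = 1).card : ℝ) ≤ ε * n →
    c * lam ^ n ≤ opNorm (wordProd A w)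

/-- `(A₁, A₂)` is resistant. -/
def Resistant (A : Fin 2 → Matrix (Fin 2) (Fin 2) ℝ) : Prop :=
  ∃ c > (0:ℝ), ∃ ε > (0:ℝ), ∃ lam > (1:ℝ), ResistantWith c ε lam A

/-- `ℋ`: `2 × 2` real matrices of determinant one with two unequal real eigenvalues. -/
def Hset : Set (Matrix (Fin 2) (Fin 2) ℝ) :=
  {H | H.det = 1 ∧ ∃ a b : ℝ, a ≠ b ∧ H.charpoly.IsRoot a ∧ H.charpoly.IsRoot b}

/-- `ℰ`: `2 × 2` real matrices of determinant one with non-real eigenvalues. -/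
def Eset : Set (Matrix (Fin 2) (Fin 2) ℝ) :=
  {R | R.det = 1 ∧ ∀ x : ℝ, ¬ R.charpoly.IsRoot x}


/-- Abbreviation for the space of `2 × 2` real matrices. -/
abbrev Mat2 := Matrix (Fin 2) (Fin 2) ℝ

/-!
Let `u` be the word `1ʲ 2ᵏ`. Its product is `diag(λʲ, δʲ) · λᵏ R_{π/2}`, whose square is the
scalar matrix `-λ^{j+2k} δʲ I`; hence the `m`-th power of `u²` has singular value function
`(λ^{j+2k} δʲ)^{ms}`. That single word already contributes `r^m` to the `2m(j+k)`-th term of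
the series, with `r = (λ^{j+2k} δʲ)^{s(1-q)} min(p, 1-p)^{2q(j+k)}`, so convergence forces
`r < 1`, i.e. `s (q-1) log(1/(λ^{j+2k} δʲ)) < 2 (j+k) q log(1/min(p, 1-p))`. Letting `j → ∞`
gives `s ≤ q log min(p, 1-p) / ((q-1) log √(λδ))`.
-/

theorem Matrix.IsHermitian.eigenvalues_eq_of_eq_smul_one {𝕜 n : Type*} [RCLike 𝕜] [Fintype n]
    [DecidableEq n] {A : Matrix n n 𝕜} (hA : A.IsHermitian) {t : ℝ} (h : A = t • 1) (i : n) :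
    hA.eigenvalues i = t := by
  subst h
  have : Nonempty n := ⟨i⟩
  have hspec : hA.eigenvalues i ∈ spectrum ℝ (algebraMap ℝ (Matrix n n 𝕜) t) := by
    rw [Algebra.algebraMap_eq_smul_one]
    exact hA.eigenvalues_mem_spectrum_real i
  rwa [spectrum.scalar_eq, Set.mem_singleton_iff] at hspec

theorem singularValues_smul_one {d : ℕ} (c : ℝ) (j : Fin d) :
    singularValues (c • (1 : Matrix (Fin d) (Fin d) ℝ)) j = |c| := by
  have hsq : (c • (1 : Matrix (Fin d) (Fin d) ℝ)).transpose * (c • 1) = (c * c) • 1 := by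
    simp [Matrix.transpose_smul, smul_smul]
  simp only [singularValues, Matrix.IsHermitian.eigenvalues_eq_of_eq_smul_one _ hsq,
    Real.sqrt_mul_self_eq_abs]

theorem sum_ite_lt_floor_eq {d : ℕ} (hd : d ≠ 0) {s : ℝ} (hs : s < d) :
    ∑ i : Fin d, (if (i : ℕ) < ⌊s⌋₊ then (1 : ℝ) else if (i : ℕ) = ⌊s⌋₊ then s - ⌊s⌋₊ else 0)
      = s := by
  set m := ⌊s⌋₊
  have hm : m + 1 ≤ d := (Nat.floor_lt' hd).mpr hs
  let f : ℕ → ℝ := fun i => if i < m then 1 else if i = m then s - m else 0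
  have hlow : ∑ i ∈ Finset.range m, f i = m := by
    rw [Finset.sum_congr rfl fun i hi => if_pos (Finset.mem_range.mp hi)]
    simp
  have hhigh : ∑ i ∈ Finset.Ico (m + 1) d, f i = 0 :=
    Finset.sum_eq_zero fun i hi => by
      simp only [Finset.mem_Ico] at hi
      simp only [f, if_neg (show ¬i < m by omega), if_neg (show i ≠ m by omega)]
  rw [Fin.sum_univ_eq_sum_range f, ← Finset.sum_range_add_sum_Ico _ hm, Finset.sum_range_succ,
    hlow, hhigh]
  simp [f]

theorem svf_smul_one {d : ℕ} (hd : 0 < d) (s : ℝ) {c : ℝ} (hc : c ≠ 0) :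
    svf s (c • (1 : Matrix (Fin d) (Fin d) ℝ)) = |c| ^ s := by
  have habs : 0 < |c| := abs_pos.mpr hc
  unfold svf
  split_ifs with hds
  · rw [Matrix.det_smul, Matrix.det_one, mul_one, Fintype.card_fin, abs_pow,
      ← Real.rpow_natCast, ← Real.rpow_mul habs.le, mul_div_cancel₀ _ (by positivity)]
  · have hfactor : ∀ i : Fin d,
        (if (i : ℕ) < ⌊s⌋₊ then |c| else if (i : ℕ) = ⌊s⌋₊ then |c| ^ (s - ⌊s⌋₊) else 1) =
          |c| ^ (if (i : ℕ) < ⌊s⌋₊ then (1 : ℝ) else if (i : ℕ) = ⌊s⌋₊ then s - ⌊s⌋₊ else 0) :=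
      fun i => by split_ifs <;> simp
    simp only [singularValues_smul_one, hfactor]
    rw [← Real.rpow_sum_of_pos habs, sum_ite_lt_floor_eq hd.ne' (not_le.mp hds)]

theorem wordProd_append {d a b : ℕ} (A : Fin 2 → Matrix (Fin d) (Fin d) ℝ)
    (u : Fin a → Fin 2) (v : Fin b → Fin 2) :
    wordProd A (Fin.append u v) = wordProd A u * wordProd A v := by
  simp only [wordProd, ← List.prod_append, ← List.ofFn_fin_append]
  congr 2
  funext i
  refine Fin.addCases (fun i => ?_) (fun i => ?_) i <;> simp

theorem wordProd_const {d n : ℕ} (A : Fin 2 → Matrix (Fin d) (Fin d) ℝ) (i : Fin 2) :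
    wordProd A (fun _ : Fin n => i) = A i ^ n := by
  rw [wordProd, List.ofFn_const, List.prod_replicate]

theorem wordProd_repeat {d n : ℕ} (A : Fin 2 → Matrix (Fin d) (Fin d) ℝ)
    (w : Fin n → Fin 2) (m : ℕ) :
    wordProd A (Fin.repeat m w) = wordProd A w ^ m := by
  have hmap : ∀ {k} (v : Fin k → Fin 2), wordProd A v = ((List.ofFn v).map A).prod := fun v => by
    rw [wordProd, List.map_ofFn]; rfl
  rw [hmap, hmap, List.ofFn_fin_repeat, List.map_flatten, List.map_replicate, List.prod_flatten,
    List.map_replicate, List.prod_replicate]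

theorem le_div_of_forall_nat_mul_add_le {x a b c e : ℝ} (ha : 0 < a)
    (h : ∀ j : ℕ, x * (j * a + b) ≤ j * c + e) : x ≤ c / a := by
  rw [le_div_iff₀ ha]
  by_contra! hlt
  obtain ⟨j, hj⟩ := exists_nat_gt ((e - x * b) / (x * a - c))
  rw [div_lt_iff₀ (sub_pos.mpr hlt)] at hj
  linarith [h j]

theorem min_le_pvec (p : ℝ) (i : Fin 2) : min p (1 - p) ≤ pvec p i := by
  fin_cases i
  · exact min_le_left _ _
  · exact min_le_right _ _

theorem svf_nonneg {d : ℕ} (s : ℝ) (A : Matrix (Fin d) (Fin d) ℝ) : 0 ≤ svf s A := by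
  have hsv : ∀ i, 0 ≤ singularValues A i := fun i => Real.sqrt_nonneg _
  unfold svf
  split_ifs
  · positivity
  · refine Finset.prod_nonneg fun i _ => ?_
    split_ifs
    · exact hsv i
    · exact Real.rpow_nonneg (hsv i) _
    · exact zero_le_one

section Zsum

variable {A : Fin 2 → Mat2} {p q s : ℝ}

theorem weight_le_Zsum (hp : p ∈ Set.Ioo (0 : ℝ) 1) (hq : 0 ≤ q) {n : ℕ} (w : Fin n → Fin 2) :
    svf s (wordProd A w) ^ (1 - q) * (min p (1 - p) ^ q) ^ n ≤ Zsum A p q s n := by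
  have hmin : 0 < min p (1 - p) := lt_min hp.1 (by linarith [hp.2])
  have hprod : (min p (1 - p) ^ q) ^ n ≤ ∏ j : Fin n, pvec p (w j) ^ q := by
    rw [← Fin.prod_const]
    exact Finset.prod_le_prod (fun _ _ => by positivity)
      fun j _ => Real.rpow_le_rpow hmin.le (min_le_pvec p (w j)) hq
  refine (mul_le_mul_of_nonneg_left hprod (Real.rpow_nonneg (svf_nonneg _ _) _)).trans ?_
  refine Finset.single_le_sum (f := fun w : Fin n → Fin 2 =>
    svf s (wordProd A w) ^ (1 - q) * ∏ j : Fin n, pvec p (w j) ^ q) (fun v _ => ?_)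
    (Finset.mem_univ w)
  have hpvec : ∀ j, 0 ≤ pvec p (v j) := fun j => hmin.le.trans (min_le_pvec p (v j))
  exact mul_nonneg (Real.rpow_nonneg (svf_nonneg _ _) _)
    (Finset.prod_nonneg fun j _ => Real.rpow_nonneg (hpvec j) _)

theorem tendsto_Zsum_of_summable (hsum : Summable fun n : ℕ => Zsum A p q s (n + 1)) :
    Tendsto (Zsum A p q s) atTop (𝓝 0) :=
  (tendsto_add_atTop_iff_nat 1).mp hsum.tendsto_atTop_zero

theorem weight_lt_one_of_wordProd_eq_smul_one
    (hsum : Summable fun n : ℕ => Zsum A p q s (n + 1)) (hp : p ∈ Set.Ioo (0 : ℝ) 1)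
    (hq : 0 ≤ q) {N : ℕ} (hN : 0 < N) (v : Fin N → Fin 2) {c : ℝ} (hc : c ≠ 0)
    (hv : wordProd A v = c • 1) :
    |c| ^ (s * (1 - q)) * (min p (1 - p) ^ q) ^ N < 1 := by
  set r := |c| ^ (s * (1 - q)) * (min p (1 - p) ^ q) ^ N
  have hpow_le : ∀ m : ℕ, r ^ m ≤ Zsum A p q s (m * N) := fun m => by
    have hsvf : svf s (wordProd A (Fin.repeat m v)) ^ (1 - q) = (|c| ^ (s * (1 - q))) ^ m := by
      rw [wordProd_repeat, hv, smul_pow, one_pow, svf_smul_one two_pos s (pow_ne_zero m hc),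
        abs_pow, ← Real.rpow_natCast, ← Real.rpow_natCast, ← Real.rpow_mul (abs_nonneg c),
        ← Real.rpow_mul (abs_nonneg c), ← Real.rpow_mul (abs_nonneg c)]
      ring_nf
    calc r ^ m = svf s (wordProd A (Fin.repeat m v)) ^ (1 - q) * (min p (1 - p) ^ q) ^ (m * N) := by
          rw [hsvf, mul_pow, pow_mul']
      _ ≤ Zsum A p q s (m * N) := weight_le_Zsum hp hq _
  have hlim : Tendsto (fun m => Zsum A p q s (m * N)) atTop (𝓝 0) :=
    (tendsto_Zsum_of_summable hsum).comp
      (tendsto_atTop_mono (fun m => Nat.le_mul_of_pos_right m hN) tendsto_id)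
  by_contra! hr
  have : (1 : ℝ) ≤ 0 :=
    ge_of_tendsto hlim (Eventually.of_forall fun m => (one_le_pow₀ hr).trans (hpow_le m))
  linarith

end Zsum

theorem rot_add (x y : ℝ) : rot (x + y) = rot x * rot y := by
  simp only [rot, Matrix.mul_fin_two, Real.cos_add, Real.sin_add]
  ext i j
  fin_cases i <;> fin_cases j <;> simp <;> ring

theorem rot_pow (θ : ℝ) (n : ℕ) : rot θ ^ n = rot (n * θ) := by
  induction n with
  | zero => simp [rot, Matrix.one_fin_two]
  | succ n ih => rw [pow_succ, ih, ← rot_add]; push_cast; congr 1; ring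

theorem wordProd_diag_rot_sq (lam del : ℝ) {k : ℕ} (hk : k ≠ 0) (j : ℕ) :
    wordProd ![Matrix.diagonal ![lam, del], lam • rot (Real.pi / (2 * k))]
      (Fin.repeat 2 (Fin.append (fun _ : Fin j => (0 : Fin 2)) fun _ : Fin k => 1))
      = (-(lam ^ (j + 2 * k) * del ^ j)) • 1 := by
  have hangle : (k : ℝ) * (Real.pi / (2 * k)) = Real.pi / 2 := by field_simp
  rw [wordProd_repeat, wordProd_append, wordProd_const, wordProd_const]
  simp only [Matrix.cons_val_zero, Matrix.cons_val_one, Matrix.diagonal_pow, smul_pow, rot_pow,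
    hangle]
  ext a b
  fin_cases a <;> fin_cases b <;>
    simp [rot, sq, Matrix.mul_apply, Fin.sum_univ_two, Matrix.diagonal] <;> ring

theorem log_weight_neg_of_summable_Zsum_diag_rot {p q s lam del : ℝ} {k : ℕ}
    (hsum : Summable fun n : ℕ =>
      Zsum ![Matrix.diagonal ![lam, del], lam • rot (Real.pi / (2 * k))] p q s (n + 1))
    (hp : p ∈ Set.Ioo (0 : ℝ) 1) (hq : 0 ≤ q) (hlam : 0 < lam) (hdel : 0 < del) (hk : k ≠ 0)
    (j : ℕ) :
    s * (1 - q) * ((j + 2 * k) * Real.log lam + j * Real.log del)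
      + 2 * (j + k) * (q * Real.log (min p (1 - p))) < 0 := by
  have hmin : 0 < min p (1 - p) := lt_min hp.1 (by linarith [hp.2])
  have hc : -(lam ^ (j + 2 * k) * del ^ j) ≠ 0 := neg_ne_zero.mpr (by positivity)
  have hweight := weight_lt_one_of_wordProd_eq_smul_one hsum hp hq (by omega) _ hc
    (wordProd_diag_rot_sq lam del hk j)
  have hlog := Real.log_neg (by positivity) hweight
  rw [Real.log_mul (by positivity) (by positivity), Real.log_rpow (by positivity), Real.log_pow,
    Real.log_rpow hmin, abs_neg, abs_of_pos (by positivity),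
    Real.log_mul (by positivity) (by positivity), Real.log_pow, Real.log_pow] at hlog
  exact_mod_cast hlog

theorem stmt15_general (q p lam del : ℝ) (hq : 1 < q) (hp : p ∈ Set.Ioo (0 : ℝ) 1)
    (hdel : 0 < del) (hdl : del < lam) (hlam : lam < 1 / 2)
    (k : ℕ) (hk : 1 ≤ k) :
    rqDim ![Matrix.diagonal ![lam, del], lam • rot (Real.pi / (2 * k))] p q
      ≤ q * Real.log (min p (1 - p)) / ((q - 1) * Real.log (Real.sqrt (lam * del))) := by
  have hlam0 : 0 < lam := hdel.trans hdl
  have hloglam : Real.log lam < 0 := Real.log_neg hlam0 (by linarith)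
  have hlogdel : Real.log del < 0 := Real.log_neg hdel (by linarith)
  have hlogmin : Real.log (min p (1 - p)) < 0 :=
    Real.log_neg (lt_min hp.1 (by linarith [hp.2])) (min_lt_of_left_lt hp.2)
  have hden : 0 < (q - 1) * (-Real.log lam - Real.log del) :=
    mul_pos (by linarith) (by linarith)
  have hbound : q * Real.log (min p (1 - p)) / ((q - 1) * Real.log (Real.sqrt (lam * del)))
      = 2 * q * -Real.log (min p (1 - p)) / ((q - 1) * (-Real.log lam - Real.log del)) := by
    rw [Real.log_sqrt (by positivity), Real.log_mul hlam0.ne' hdel.ne',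
      div_eq_div_iff (mul_neg_of_pos_of_neg (by linarith) (by linarith)).ne hden.ne']
    ring
  rw [hbound]
  refine Real.sSup_le (fun s ⟨_, hsum⟩ => le_div_of_forall_nat_mul_add_le hden
    (b := (q - 1) * (2 * k * -Real.log lam)) (e := 2 * k * q * -Real.log (min p (1 - p)))
    fun j => ?_) (div_pos (by nlinarith) hden).le
  linarith [log_weight_neg_of_summable_Zsum_diag_rot hsum hp (by linarith) hlam0 hdel
    (by omega) j]

/-- For `B₁ = diag(λ,δ)` and `B₂ = λ·R_{π/(2k)}` with `k ≥ 1`: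
`𝔯_q(B₁,B₂,p) ≤ q·log(min{p,1−p})/((q−1)·log √(λδ))`. -/
theorem stmt15 (q p lam del : ℝ) (hq : 1 < q) (hp : p ∈ Set.Ioo (0 : ℝ) 1)
    (hdel : 0 < del) (hdl : del < lam) (hlam : lam < 1 / 2)
    (hsmall : q * Real.log (min p (1 - p)) / ((q - 1) * Real.log (Real.sqrt (lam * del))) < 1)
    (k : ℕ) (hk : 1 ≤ k) :
    rqDim ![Matrix.diagonal ![lam, del], lam • rot (Real.pi / (2 * k))] p q
      ≤ q * Real.log (min p (1 - p)) / ((q - 1) * Real.log (Real.sqrt (lam * del))) :=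
  stmt15_general q p lam del hq hp hdel hdl hlam k hk
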